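/- arXiv:math/0304440 — 2 statements merged into one kernel-verified Lean document; each statement's English description precedes it below -/
import Mathlib

section
/- Let f : [0,1] → [0,1] be an orientation-preserving C^{1,α} diffeomorphism (f' Hölder of exponent α ∈ (0,1], f'> 0) fixing 0 and 1. If J ⊂ [0,1] is a closed interval with f(J) ∩ J = ∅, then there is a constant c depending only on f such that for every n ∈ ℕ and all x, y ∈ J, |log((fⁿ)'(x)/(fⁿ)'(y))| ≤ c·n^{1−α}. -/
/-!
Write `x_k = fᵏ x` and `y_k = fᵏ y`. By the chain rule,
`log ((fⁿ)' x / (fⁿ)' y) = ∑_{k<n} (log f'(x_k) - log f'(y_k))`. Being Hölder, `f'` is continuous,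
so `f' ≥ m > 0` on `[0,1]` and each summand is at most
`|f'(x_k) - f'(y_k)| / m ≤ (C / m) |x_k - y_k|^α`. Since `f(J)` misses `J` and `f` is increasing,
the intervals `fᵏ(J)` move monotonically to one side, so their lengths, which dominate
`|x_k - y_k|`, add up to at most `1`. Hölder's inequality then bounds `∑_{k<n} |x_k - y_k|^α`
by `n^{1-α}`.
-/

open Set Finset Filter Topology

theorem ContinuousOn.of_dist_le_mul_rpow {X Y : Type*} [PseudoMetricSpace X] [PseudoMetricSpace Y]
    {g : X → Y} {s : Set X} {C α : ℝ} (hα : 0 < α)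
    (hg : ∀ x ∈ s, ∀ y ∈ s, dist (g x) (g y) ≤ C * dist x y ^ α) : ContinuousOn g s := by
  intro x hx
  have hbound : Tendsto (fun y => C * dist y x ^ α) (𝓝[s] x) (𝓝 0) := by
    have hcont : Continuous fun y => C * dist y x ^ α :=
      continuous_const.mul ((continuous_id.dist continuous_const).rpow_const fun _ => Or.inr hα.le)
    simpa [Real.zero_rpow hα.ne'] using (hcont.tendsto x).mono_left nhdsWithin_le_nhds
  rw [ContinuousWithinAt, tendsto_iff_dist_tendsto_zero]
  exact squeeze_zero' (Eventually.of_forall fun _ => dist_nonneg)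
    (eventually_nhdsWithin_of_forall fun y hy => hg y hy x hx) hbound

theorem MonotoneOn.iterate_of_mapsTo {α : Type*} [Preorder α] {f : α → α} {s : Set α}
    (hf : MonotoneOn f s) (hs : MapsTo f s s) (n : ℕ) : MonotoneOn f^[n] s := by
  induction n with
  | zero => exact monotoneOn_id
  | succ n ih => rw [Function.iterate_succ']; exact hf.comp ih (hs.iterate n)

theorem Finset.sum_rpow_le_card_rpow_one_sub {ι : Type*} (s : Finset ι) {α : ℝ} (hα0 : 0 < α)
    (hα1 : α ≤ 1) {t : ι → ℝ} (ht : ∀ i, 0 ≤ t i) (hsum : ∑ i ∈ s, t i ≤ 1) :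
    ∑ i ∈ s, t i ^ α ≤ (#s : ℝ) ^ (1 - α) := by
  have hp : 1 ≤ α⁻¹ := one_le_inv_iff₀.2 ⟨hα0, hα1⟩
  have hholder := Real.inner_le_weight_mul_Lp_of_nonneg s hp (fun _ => 1) (fun i => t i ^ α)
    (fun _ => zero_le_one) (fun i => Real.rpow_nonneg (ht i) α)
  simp only [one_mul, sum_const, nsmul_eq_mul, mul_one, inv_inv] at hholder
  simp only [← Real.rpow_mul (ht _), mul_inv_cancel₀ hα0.ne', Real.rpow_one] at hholder
  calc ∑ i ∈ s, t i ^ α ≤ (#s : ℝ) ^ (1 - α) * (∑ i ∈ s, t i) ^ α := hholder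
    _ ≤ (#s : ℝ) ^ (1 - α) * 1 ^ α := by
        gcongr
        exact sum_nonneg fun i _ => ht i
    _ = (#s : ℝ) ^ (1 - α) := by rw [Real.one_rpow, mul_one]

theorem Real.log_sub_log_le_abs_sub_div {u v m : ℝ} (hu : 0 < u) (hm : 0 < m) (hv : m ≤ v) :
    Real.log u - Real.log v ≤ |u - v| / m := by
  have hv0 : 0 < v := hm.trans_le hv
  calc Real.log u - Real.log v = Real.log (u / v) := (Real.log_div hu.ne' hv0.ne').symm
    _ ≤ u / v - 1 := Real.log_le_sub_one_of_pos (div_pos hu hv0)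
    _ = (u - v) / v := by field_simp
    _ ≤ |u - v| / v := by gcongr; exact le_abs_self _
    _ ≤ |u - v| / m := by gcongr

theorem Real.abs_log_sub_log_le_abs_sub_div {u v m : ℝ} (hm : 0 < m) (hu : m ≤ u) (hv : m ≤ v) :
    |Real.log u - Real.log v| ≤ |u - v| / m := by
  rw [abs_sub_le_iff]
  refine ⟨log_sub_log_le_abs_sub_div (hm.trans_le hu) hm hv, ?_⟩
  rw [abs_sub_comm]
  exact log_sub_log_le_abs_sub_div (hm.trans_le hv) hm hu

theorem hasDerivAt_iterate_prod {𝕜 : Type*} [NontriviallyNormedField 𝕜] {f : 𝕜 → 𝕜} {x : 𝕜}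
    {n : ℕ} (hf : ∀ k < n, DifferentiableAt 𝕜 f (f^[k] x)) :
    HasDerivAt f^[n] (∏ k ∈ range n, deriv f (f^[k] x)) x := by
  induction n with
  | zero => simpa using hasDerivAt_id x
  | succ n ih =>
    rw [Function.iterate_succ', prod_range_succ, mul_comm]
    exact (hf n n.lt_succ_self).hasDerivAt.comp x (ih fun k hk => hf k (hk.trans n.lt_succ_self))

theorem abs_log_deriv_iterate_div_le {f : ℝ → ℝ} {s : Set ℝ} {m C α : ℝ} (hm : 0 < m)
    (hs : MapsTo f s s) (hder : ∀ x ∈ s, m ≤ deriv f x)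
    (hhol : ∀ x ∈ s, ∀ y ∈ s, |deriv f x - deriv f y| ≤ C * |x - y| ^ α)
    {x y : ℝ} (hx : x ∈ s) (hy : y ∈ s) (n : ℕ) :
    |Real.log (deriv f^[n] x / deriv f^[n] y)| ≤
      C / m * ∑ k ∈ range n, |f^[k] x - f^[k] y| ^ α := by
  have hpos : ∀ z ∈ s, ∀ k, 0 < deriv f (f^[k] z) := fun z hz k =>
    hm.trans_le (hder _ (hs.iterate k hz))
  have hprod : ∀ z ∈ s, deriv f^[n] z = ∏ k ∈ range n, deriv f (f^[k] z) := fun z hz =>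
    (hasDerivAt_iterate_prod fun k _ => differentiableAt_of_deriv_ne_zero (hpos z hz k).ne').deriv
  rw [hprod x hx, hprod y hy, Real.log_div (prod_ne_zero_iff.2 fun k _ => (hpos x hx k).ne')
      (prod_ne_zero_iff.2 fun k _ => (hpos y hy k).ne'),
    Real.log_prod fun k _ => (hpos x hx k).ne', Real.log_prod fun k _ => (hpos y hy k).ne',
    ← sum_sub_distrib, mul_sum]
  refine (abs_sum_le_sum_abs _ _).trans (sum_le_sum fun k _ => ?_)
  have hxk := hs.iterate k hx
  have hyk := hs.iterate k hy
  calc _ ≤ |deriv f (f^[k] x) - deriv f (f^[k] y)| / m :=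
        Real.abs_log_sub_log_le_abs_sub_div hm (hder _ hxk) (hder _ hyk)
    _ ≤ C * |f^[k] x - f^[k] y| ^ α / m := by gcongr; exact hhol _ hxk _ hyk
    _ = C / m * |f^[k] x - f^[k] y| ^ α := by ring

theorem forall_lt_or_forall_lt_of_disjoint_image {α : Type*} [ConditionallyCompleteLinearOrder α]
    [TopologicalSpace α] [OrderTopology α] [DenselyOrdered α] {f : α → α} {a b : α}
    (hf : ContinuousOn f (Icc a b)) (hdisj : Disjoint (f '' Icc a b) (Icc a b)) :
    (∀ x ∈ Icc a b, f x < a) ∨ (∀ x ∈ Icc a b, b < f x) := by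
  by_contra! h
  obtain ⟨⟨x, hx, hax⟩, ⟨y, hy, hyb⟩⟩ := h
  have hxb : b < f x := not_le.1 fun h => disjoint_left.1 hdisj (mem_image_of_mem f hx) ⟨hax, h⟩
  have hya : f y < a := not_le.1 fun h => disjoint_left.1 hdisj (mem_image_of_mem f hy) ⟨h, hyb⟩
  have hab : a ≤ b := hx.1.trans hx.2
  have ha : a ∈ f '' Icc a b := (isPreconnected_Icc.image f hf).Icc_subset
    (mem_image_of_mem f hy) (mem_image_of_mem f hx) ⟨hya.le, hab.trans hxb.le⟩
  exact disjoint_left.1 hdisj ha ⟨le_rfl, hab⟩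

theorem sum_range_iterate_sub_le {f : ℝ → ℝ} {p q u v : ℝ} (hmaps : MapsTo f (Icc p q) (Icc p q))
    (hmono : MonotoneOn f (Icc p q)) (hu : u ∈ Icc p q) (hv : v ∈ Icc p q)
    (hside : f v ≤ u ∨ v ≤ f u) (n : ℕ) :
    ∑ k ∈ range n, (f^[k] v - f^[k] u) ≤ q - p := by
  have hmonok := hmono.iterate_of_mapsTo hmaps
  rcases hside with hside | hside
  · have hstep : ∀ k, f^[k + 1] v ≤ f^[k] u := fun k => by
      rw [Function.iterate_succ_apply]
      exact hmonok k (hmaps hv) hu hside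
    calc ∑ k ∈ range n, (f^[k] v - f^[k] u) ≤ ∑ k ∈ range n, (f^[k] v - f^[k + 1] v) :=
          sum_le_sum fun k _ => by linarith [hstep k]
      _ = v - f^[n] v := sum_range_sub' (fun k => f^[k] v) n
      _ ≤ q - p := by linarith [hv.2, (hmaps.iterate n hv).1]
  · have hstep : ∀ k, f^[k] v ≤ f^[k + 1] u := fun k => by
      rw [Function.iterate_succ_apply]
      exact hmonok k hv (hmaps hu) hside
    calc ∑ k ∈ range n, (f^[k] v - f^[k] u) ≤ ∑ k ∈ range n, (f^[k + 1] u - f^[k] u) :=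
          sum_le_sum fun k _ => by linarith [hstep k]
      _ = f^[n] u - u := sum_range_sub (fun k => f^[k] u) n
      _ ≤ q - p := by linarith [hu.1, (hmaps.iterate n hu).2]

theorem sum_range_abs_iterate_sub_le_of_disjoint_image {f : ℝ → ℝ} {p q a b : ℝ}
    (hmaps : MapsTo f (Icc p q) (Icc p q)) (hmono : MonotoneOn f (Icc p q))
    (hcont : ContinuousOn f (Icc a b)) (hab : a ≤ b) (hJ : Icc a b ⊆ Icc p q)
    (hdisj : Disjoint (f '' Icc a b) (Icc a b)) {x y : ℝ} (hx : x ∈ Icc a b) (hy : y ∈ Icc a b)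
    (n : ℕ) : ∑ k ∈ range n, |f^[k] x - f^[k] y| ≤ q - p := by
  have ha : a ∈ Icc a b := left_mem_Icc.2 hab
  have hb : b ∈ Icc a b := right_mem_Icc.2 hab
  have hmonok := hmono.iterate_of_mapsTo hmaps
  have hside : f b ≤ a ∨ b ≤ f a := (forall_lt_or_forall_lt_of_disjoint_image hcont hdisj).imp
    (fun h => (h b hb).le) (fun h => (h a ha).le)
  refine (sum_le_sum fun k _ => ?_).trans
    (sum_range_iterate_sub_le hmaps hmono (hJ ha) (hJ hb) hside n)
  have hmapsk : MapsTo f^[k] (Icc a b) (Icc (f^[k] a) (f^[k] b)) :=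
    ((hmonok k).mono hJ).mapsTo_Icc
  exact Real.dist_le_of_mem_Icc (hmapsk hx) (hmapsk hy)

theorem stmt_6_general (α : ℝ) (hα : α ∈ Set.Ioc (0:ℝ) 1)
    (f : ℝ → ℝ)
    (hmaps : Set.MapsTo f (Set.Icc 0 1) (Set.Icc 0 1))
    (hder : ∀ x ∈ Set.Icc (0:ℝ) 1, 0 < deriv f x)
    (Chol : ℝ)
    (hhol : ∀ x ∈ Set.Icc (0:ℝ) 1, ∀ y ∈ Set.Icc (0:ℝ) 1,
      |deriv f x - deriv f y| ≤ Chol * |x - y| ^ α)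
    (a b : ℝ) (hab : a ≤ b) (hJ : Set.Icc a b ⊆ Set.Icc 0 1)
    (hdisj : f '' Set.Icc a b ∩ Set.Icc a b = ∅) :
    ∃ c > 0, ∀ n : ℕ, ∀ x ∈ Set.Icc a b, ∀ y ∈ Set.Icc a b,
      |Real.log (deriv (f^[n]) x / deriv (f^[n]) y)| ≤ c * (n : ℝ) ^ (1 - α) := by
  obtain ⟨hα0, hα1⟩ := hα
  have hcont : ContinuousOn f (Icc 0 1) := fun x hx =>
    (differentiableAt_of_deriv_ne_zero (hder x hx).ne').continuousAt.continuousWithinAt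
  have hmono : MonotoneOn f (Icc 0 1) :=
    (strictMonoOn_of_deriv_pos (convex_Icc 0 1) hcont fun x hx =>
      hder x (interior_subset hx)).monotoneOn
  have hcont_deriv : ContinuousOn (deriv f) (Icc 0 1) :=
    ContinuousOn.of_dist_le_mul_rpow hα0 fun x hx y hy => by
      simpa only [Real.dist_eq] using hhol x hx y hy
  obtain ⟨x₀, hx₀, hmin⟩ := isCompact_Icc.exists_isMinOn (nonempty_Icc.2 zero_le_one) hcont_deriv
  have hm : 0 < deriv f x₀ := hder x₀ hx₀
  have hChol : 0 ≤ Chol := by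
    have h01 := hhol 0 (left_mem_Icc.2 zero_le_one) 1 (right_mem_Icc.2 zero_le_one)
    norm_num at h01
    exact (abs_nonneg _).trans h01
  refine ⟨Chol / deriv f x₀ + 1, by positivity, fun n x hx y hy => ?_⟩
  have hlen : ∑ k ∈ range n, |f^[k] x - f^[k] y| ≤ 1 := by
    simpa only [sub_zero] using sum_range_abs_iterate_sub_le_of_disjoint_image hmaps hmono (hcont.mono hJ) hab hJ
      (disjoint_iff_inter_eq_empty.2 hdisj) hx hy n
  calc _ ≤ Chol / deriv f x₀ * ∑ k ∈ range n, |f^[k] x - f^[k] y| ^ α :=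
        abs_log_deriv_iterate_div_le hm hmaps (fun z hz => hmin hz) hhol (hJ hx) (hJ hy) n
    _ ≤ Chol / deriv f x₀ * (n : ℝ) ^ (1 - α) := by
        gcongr
        simpa using sum_rpow_le_card_rpow_one_sub (range n) hα0 hα1 (fun k => abs_nonneg _) hlen
    _ ≤ (Chol / deriv f x₀ + 1) * (n : ℝ) ^ (1 - α) := by gcongr; linarith

theorem stmt_6 (α : ℝ) (hα : α ∈ Set.Ioc (0:ℝ) 1)
    (f : ℝ → ℝ)
    (hmaps : Set.MapsTo f (Set.Icc 0 1) (Set.Icc 0 1))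
    (hC1 : ContDiffOn ℝ 1 f (Set.Icc 0 1))
    (hder : ∀ x ∈ Set.Icc (0:ℝ) 1, 0 < deriv f x)
    (h0 : f 0 = 0) (h1 : f 1 = 1)
    (Chol : ℝ)
    (hhol : ∀ x ∈ Set.Icc (0:ℝ) 1, ∀ y ∈ Set.Icc (0:ℝ) 1,
      |deriv f x - deriv f y| ≤ Chol * |x - y| ^ α)
    (a b : ℝ) (hab : a ≤ b) (hJ : Set.Icc a b ⊆ Set.Icc 0 1)
    (hdisj : f '' Set.Icc a b ∩ Set.Icc a b = ∅) :
    ∃ c > 0, ∀ n : ℕ, ∀ x ∈ Set.Icc a b, ∀ y ∈ Set.Icc a b,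
      |Real.log (deriv (f^[n]) x / deriv (f^[n]) y)| ≤ c * (n : ℝ) ^ (1 - α) :=
  stmt_6_general α hα f hmaps hder Chol hhol a b hab hJ hdisj
end

section
/- Let p > 0, 0 < α < 1, and b ≥ (p+1)·α. Then the function g(x) = x^b·sin(x^{−p}) for x ∈ (0,1], extended by g(0) = 0, satisfies the Hölder condition |g(x) − g(y)| ≤ C·|x − y|^α on [0,1] for some constant C depending only on b, p, α. -/
/-!
Split according to whether `h = x - y` exceeds `y ^ (p + 1)` (for `y ≤ x`). If it does, both
points lie within `2 h ^ (1 / (p + 1))` of the origin, and the trivial bound `|g t| ≤ t ^ b` gives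
`|g x - g y| ≲ h ^ (b / (p + 1)) ≤ h ^ α`. If it does not, the mean value theorem with
`|g' t| ≲ t ^ (b - p - 1)` on `[y, x]` gives `|g x - g y| ≲ y ^ (b - p - 1) h`, and
`h < y ^ (p + 1)` turns this into `y ^ (b - (p + 1) α) h ^ α ≤ h ^ α`.
-/

open Real Set

lemma rpow_le_max_one_of_mem_Icc {y t : ℝ} (e : ℝ) (hy : 0 < y) (ht : t ∈ Icc y 1) :
    t ^ e ≤ max (y ^ e) 1 := by
  rcases le_total 0 e with he | he
  · exact le_max_of_le_right ((rpow_le_rpow (hy.le.trans ht.1) ht.2 he).trans_eq (one_rpow e))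
  · exact le_max_of_le_left (rpow_le_rpow_of_nonpos hy ht.1 he)

lemma rpow_inv_rpow_le_rpow {h q α b : ℝ} (hh0 : 0 ≤ h) (hh1 : h ≤ 1) (hq : 0 < q)
    (hα : 0 ≤ α) (hb : q * α ≤ b) : (h ^ q⁻¹) ^ b ≤ h ^ α := by
  rw [← rpow_mul hh0]
  refine rpow_le_rpow_of_exponent_ge' hh0 hh1 hα ?_
  rw [inv_mul_eq_div, le_div_iff₀ hq]
  linarith

lemma rpow_sub_mul_le_rpow {y h q α b : ℝ} (hy0 : 0 < y) (hy1 : y ≤ 1) (hh : 0 ≤ h)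
    (hhy : h ≤ y ^ q) (hα1 : α ≤ 1) (hb : q * α ≤ b) : y ^ (b - q) * h ≤ h ^ α := by
  have split : h ^ (1 - α) * h ^ α = h := by
    rw [← rpow_add' hh (by norm_num), sub_add_cancel, rpow_one]
  calc y ^ (b - q) * h = y ^ (b - q) * h ^ (1 - α) * h ^ α := by rw [mul_assoc, split]
    _ ≤ y ^ (b - q) * (y ^ q) ^ (1 - α) * h ^ α := by gcongr
    _ = y ^ (b - q * α) * h ^ α := by
        rw [← rpow_mul hy0.le, ← rpow_add hy0]
        ring_nf
    _ ≤ h ^ α := mul_le_of_le_one_left (by positivity) (rpow_le_one hy0.le hy1 (by linarith))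

section HolderOfRpowBounds

variable {f f' : ℝ → ℝ} {b q α M : ℝ}

lemma abs_sub_le_of_rpow_le_sub (hf : ∀ t, 0 ≤ t → |f t| ≤ t ^ b) (hq : 1 ≤ q) (hα : 0 ≤ α)
    (hb : q * α ≤ b) {x y : ℝ} (hy : 0 ≤ y) (hyx : y ≤ x) (hxy : x - y ≤ 1)
    (hfar : y ^ q ≤ x - y) : |f x - f y| ≤ (2 ^ b + 1) * (x - y) ^ α := by
  have hq0 : 0 < q := by linarith
  have hh : 0 ≤ x - y := sub_nonneg.2 hyx
  have hb0 : 0 ≤ b := le_trans (by positivity) hb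
  set s := (x - y) ^ q⁻¹
  have hys : y ≤ s := (le_rpow_inv_iff_of_pos hy hh hq0).2 hfar
  have hhs : x - y ≤ s := self_le_rpow_of_le_one hh hxy (inv_le_one_of_one_le₀ hq)
  calc |f x - f y| ≤ |f x| + |f y| := abs_sub _ _
    _ ≤ x ^ b + y ^ b := add_le_add (hf x (hy.trans hyx)) (hf y hy)
    _ ≤ (2 * s) ^ b + s ^ b := by gcongr <;> linarith
    _ = (2 ^ b + 1) * s ^ b := by rw [mul_rpow zero_le_two (hy.trans hys)]; ring
    _ ≤ (2 ^ b + 1) * (x - y) ^ α := by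
        gcongr
        exact rpow_inv_rpow_le_rpow hh hxy hq0 hα hb

lemma abs_sub_le_of_sub_le_rpow (hf' : ∀ t, 0 < t → HasDerivAt f (f' t) t)
    (hM : ∀ t, 0 < t → t ≤ 1 → |f' t| ≤ M * t ^ (b - q)) (hM0 : 0 ≤ M) (hα1 : α ≤ 1)
    (hb : q * α ≤ b) {x y : ℝ} (hy : 0 < y) (hyx : y ≤ x) (hx : x ≤ 1)
    (hnear : x - y ≤ y ^ q) : |f x - f y| ≤ M * (x - y) ^ α := by
  have hh : 0 ≤ x - y := sub_nonneg.2 hyx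
  set K := max (y ^ (b - q)) 1
  have hderiv : ∀ t ∈ Ico y x, ‖f' t‖ ≤ M * K := fun t ht =>
    (hM t (hy.trans_le ht.1) (ht.2.le.trans hx)).trans <| mul_le_mul_of_nonneg_left
      (rpow_le_max_one_of_mem_Icc _ hy ⟨ht.1, ht.2.le.trans hx⟩) hM0
  have hmvt : |f x - f y| ≤ M * K * (x - y) :=
    norm_image_sub_le_of_norm_deriv_le_segment'
      (fun t ht => (hf' t (hy.trans_le ht.1)).hasDerivWithinAt) hderiv x ⟨hyx, le_rfl⟩
  have hK : K * (x - y) ≤ (x - y) ^ α := by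
    rw [max_mul_of_nonneg _ _ hh, one_mul]
    exact max_le (rpow_sub_mul_le_rpow hy (hyx.trans hx) hh hnear hα1 hb)
      (self_le_rpow_of_le_one hh (by linarith) hα1)
  calc |f x - f y| ≤ M * K * (x - y) := hmvt
    _ ≤ M * (x - y) ^ α := by rw [mul_assoc]; gcongr

theorem exists_abs_sub_le_rpow_of_rpow_bounds (hf : ∀ t, 0 ≤ t → |f t| ≤ t ^ b)
    (hf' : ∀ t, 0 < t → HasDerivAt f (f' t) t)
    (hM : ∀ t, 0 < t → t ≤ 1 → |f' t| ≤ M * t ^ (b - q)) (hq : 1 ≤ q) (hα0 : 0 ≤ α)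
    (hα1 : α ≤ 1) (hb : q * α ≤ b) :
    ∃ C : ℝ, ∀ x ∈ Icc (0 : ℝ) 1, ∀ y ∈ Icc (0 : ℝ) 1, |f x - f y| ≤ C * |x - y| ^ α := by
  have hM0 : 0 ≤ M := by simpa using (abs_nonneg _).trans (hM 1 one_pos le_rfl)
  have hC : ∀ x ∈ Icc (0 : ℝ) 1, ∀ y ∈ Icc (0 : ℝ) 1, y ≤ x →
      |f x - f y| ≤ (2 ^ b + 1 + M) * |x - y| ^ α := by
    intro x ⟨hx0, hx1⟩ y ⟨hy0, hy1⟩ hyx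
    have hpow : 0 ≤ (x - y) ^ α := rpow_nonneg (sub_nonneg.2 hyx) α
    rw [abs_of_nonneg (sub_nonneg.2 hyx)]
    rcases le_or_gt (y ^ q) (x - y) with hfar | hnear
    · have := abs_sub_le_of_rpow_le_sub hf hq hα0 hb hy0 hyx (by linarith) hfar
      nlinarith
    · have hy : 0 < y := by
        refine hy0.lt_of_ne fun h => ?_
        rw [← h, zero_rpow (by linarith)] at hnear
        linarith
      have := abs_sub_le_of_sub_le_rpow hf' hM hM0 hα1 hb hy hyx hx1 hnear.le
      have : (0 : ℝ) < 2 ^ b := by positivity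
      nlinarith
  refine ⟨2 ^ b + 1 + M, fun x hx y hy => ?_⟩
  rcases le_total y x with hyx | hxy
  · exact hC x hx y hy hyx
  · rw [abs_sub_comm, abs_sub_comm x]
    exact hC y hy x hx hxy

end HolderOfRpowBounds

noncomputable def chirp (b p t : ℝ) : ℝ := t ^ b * sin (t ^ (-p))

noncomputable def chirpDeriv (b p t : ℝ) : ℝ :=
  b * t ^ (b - 1) * sin (t ^ (-p)) - p * t ^ (b - (p + 1)) * cos (t ^ (-p))

lemma abs_chirp_le (b p : ℝ) {t : ℝ} (ht : 0 ≤ t) : |chirp b p t| ≤ t ^ b := by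
  rw [chirp, abs_mul, abs_of_nonneg (rpow_nonneg ht b)]
  exact mul_le_of_le_one_right (rpow_nonneg ht b) (abs_sin_le_one _)

lemma hasDerivAt_chirp (b p : ℝ) {t : ℝ} (ht : 0 < t) :
    HasDerivAt (chirp b p) (chirpDeriv b p t) t := by
  refine ((hasDerivAt_rpow_const (p := b) (Or.inl ht.ne')).mul
    (hasDerivAt_rpow_const (p := -p) (Or.inl ht.ne')).sin).congr_deriv ?_
  rw [chirpDeriv, show b - (p + 1) = b + (-p - 1) by ring, rpow_add ht]
  ring

lemma abs_chirpDeriv_le {b p t : ℝ} (hb : 0 ≤ b) (hp : 0 ≤ p) (ht0 : 0 < t) (ht1 : t ≤ 1) :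
    |chirpDeriv b p t| ≤ (b + p) * t ^ (b - (p + 1)) := by
  have hexp : t ^ (b - 1) ≤ t ^ (b - (p + 1)) :=
    rpow_le_rpow_of_exponent_ge ht0 ht1 (by linarith)
  calc |chirpDeriv b p t|
      ≤ |b * t ^ (b - 1) * sin (t ^ (-p))| + |p * t ^ (b - (p + 1)) * cos (t ^ (-p))| :=
        abs_sub _ _
    _ ≤ b * t ^ (b - 1) + p * t ^ (b - (p + 1)) := by
        rw [abs_mul, abs_mul (p * _), abs_of_nonneg (by positivity : 0 ≤ b * t ^ (b - 1)),
          abs_of_nonneg (by positivity : 0 ≤ p * t ^ (b - (p + 1)))]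
        exact add_le_add (mul_le_of_le_one_right (by positivity) (abs_sin_le_one _))
          (mul_le_of_le_one_right (by positivity) (abs_cos_le_one _))
    _ ≤ (b + p) * t ^ (b - (p + 1)) := by nlinarith

theorem stmt_9 (p α b : ℝ) (hp : 0 < p) (hα : α ∈ Set.Ioo (0:ℝ) 1)
    (hb : (p + 1) * α ≤ b) :
    ∃ C : ℝ, ∀ x ∈ Set.Icc (0:ℝ) 1, ∀ y ∈ Set.Icc (0:ℝ) 1,
      |x ^ b * Real.sin (x ^ (-p)) - y ^ b * Real.sin (y ^ (-p))| ≤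
        C * |x - y| ^ α := by
  obtain ⟨hα0, hα1⟩ := hα
  have hb0 : 0 ≤ b := le_trans (by positivity) hb
  exact exists_abs_sub_le_rpow_of_rpow_bounds (f := chirp b p)
    (fun _ ht => abs_chirp_le b p ht) (fun _ ht => hasDerivAt_chirp b p ht)
    (fun _ ht0 ht1 => abs_chirpDeriv_le hb0 hp.le ht0 ht1) (by linarith) hα0.le hα1.le hb
end
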